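/- arXiv:2402.18108 — 2 statements merged into one kernel-verified Lean document; each statement's English description precedes it below -/
import Mathlib

section
/- Let V be a reflexive Banach space and A : V → V*. The Brézis definition of pseudo-monotone operator is equivalent to the Browder definition. That is, the following are equivalent: (i) whenever uₙ ⇀ u in V and lim inf ⟨A(uₙ), uₙ − u⟩ ≥ 0, one has lim sup ⟨A(uₙ), uₙ − v⟩ ≤ ⟨A(u), u − v⟩ for all v ∈ V; (ii) whenever uₙ ⇀ u in V and lim inf ⟨A(uₙ), uₙ − u⟩ ≥ 0, one has A(uₙ) ⇀ A(u) in V* and lim ⟨A(uₙ), uₙ⟩ = ⟨A(u), u⟩. -/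
/-! Write `pₙ(v) = ⟨A uₙ, uₙ - v⟩`. The Brézis inequality at `v = u` and the liminf hypothesis
force `pₙ(u) → 0`; since `⟨A uₙ, w⟩ = pₙ(u - w) - pₙ(u)`, the Brézis inequality at `v = u - w`
gives `limsup ⟨A uₙ, w⟩ ≤ ⟨A u, w⟩` for every `w`, and applying this to `-w` bounds the liminf
as well. Then `⟨A uₙ, uₙ⟩ = pₙ(u) + ⟨A uₙ, u⟩ → ⟨A u, u⟩`. The converse is immediate from
`⟨A uₙ, uₙ - v⟩ = ⟨A uₙ, uₙ⟩ - ⟨A uₙ, v⟩`.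

All limsups are taken in `ℝ`, where they are junk unless the sequence is bounded; boundedness
comes from Banach–Steinhaus (weakly convergent sequences are bounded) and boundedness of `A`. -/

open Filter Topology

theorem exists_norm_le_of_forall_bddAbove_norm_dual {𝕜 E ι : Type*} [RCLike 𝕜]
    [NormedAddCommGroup E] [NormedSpace 𝕜 E] {u : ι → E}
    (h : ∀ f : StrongDual 𝕜 E, BddAbove (Set.range fun i => ‖f (u i)‖)) :
    ∃ C, ∀ i, ‖u i‖ ≤ C := by
  obtain ⟨C, hC⟩ := banach_steinhaus (g := fun i => NormedSpace.inclusionInDoubleDual 𝕜 E (u i))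
    fun f => (h f).imp fun _ hK i => hK ⟨i, rfl⟩
  exact ⟨C, fun i =>
    ((NormedSpace.inclusionInDoubleDualLi 𝕜 (E := E)).norm_map (u i)).symm.trans_le (hC i)⟩

section Pairing

variable {V ι : Type*} [NormedAddCommGroup V] [NormedSpace ℝ V] {l : Filter ι}
  {φ : ι → StrongDual ℝ V} {M : ℝ}

theorem isBoundedUnder_abs_apply {x : ι → V} {C : ℝ} (hφ : ∀ i, ‖φ i‖ ≤ M)
    (hx : ∀ i, ‖x i‖ ≤ C) :
    IsBoundedUnder (· ≤ ·) l fun i => |φ i (x i)| :=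
  isBoundedUnder_of ⟨M * C, fun i =>
    ((φ i).le_opNorm (x i)).trans <| mul_le_mul (hφ i) (hx i) (norm_nonneg _)
      ((norm_nonneg _).trans (hφ i))⟩

theorem tendsto_apply_of_forall_limsup_apply_le [l.NeBot] {φ₀ : StrongDual ℝ V}
    (hφ : ∀ i, ‖φ i‖ ≤ M) (h : ∀ w, limsup (fun i => φ i w) l ≤ φ₀ w) (w : V) :
    Tendsto (fun i => φ i w) l (𝓝 (φ₀ w)) := by
  have hb : ∀ w, IsBoundedUnder (· ≤ ·) l (fun i => φ i w) ∧
      IsBoundedUnder (· ≥ ·) l (fun i => φ i w) := fun w =>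
    isBoundedUnder_le_abs.mp (isBoundedUnder_abs_apply (x := fun _ => w) hφ fun _ => le_rfl)
  have hliminf : liminf (fun i => φ i w) l = -limsup (fun i => φ i (-w)) l := by
    rw [Antitone.map_limsup_of_continuousAt (f := Neg.neg) (fun _ _ => neg_le_neg) _
      continuous_neg.continuousAt (hb (-w)).1 (hb (-w)).2.isCoboundedUnder_le]
    simp [Function.comp_def]
  refine tendsto_of_le_liminf_of_limsup_le ?_ (h w) (hb w).1 (hb w).2
  linarith [h (-w), map_neg φ₀ w]

theorem tendsto_apply_of_forall_limsup_apply_sub_le [l.NeBot] {u : ι → V} {u₀ : V}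
    {φ₀ : StrongDual ℝ V} {C : ℝ} (hφ : ∀ i, ‖φ i‖ ≤ M) (hu : ∀ i, ‖u i‖ ≤ C)
    (hlim : 0 ≤ liminf (fun i => φ i (u i - u₀)) l)
    (h : ∀ v, limsup (fun i => φ i (u i - v)) l ≤ φ₀ (u₀ - v)) :
    (∀ v, Tendsto (fun i => φ i v) l (𝓝 (φ₀ v))) ∧
      Tendsto (fun i => φ i (u i)) l (𝓝 (φ₀ u₀)) := by
  set p : V → ι → ℝ := fun v i => φ i (u i - v)
  have hb : ∀ v, IsBoundedUnder (· ≤ ·) l (p v) ∧ IsBoundedUnder (· ≥ ·) l (p v) := fun v =>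
    isBoundedUnder_le_abs.mp <| isBoundedUnder_abs_apply hφ fun i =>
      (norm_sub_le _ _).trans (add_le_add_left (hu i) _)
  have hp₀ : Tendsto (p u₀) l (𝓝 0) :=
    tendsto_of_le_liminf_of_limsup_le hlim ((h u₀).trans_eq (by rw [sub_self, map_zero]))
      (hb u₀).1 (hb u₀).2
  have hnegp₀ : Tendsto (-p u₀) l (𝓝 0) := by rw [← neg_zero]; exact hp₀.neg
  have hsup : ∀ w, limsup (fun i => φ i w) l ≤ φ₀ w := fun w => calc
    limsup (fun i => φ i w) l = limsup (p (u₀ - w) + -p u₀) l := by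
      congr 1; ext i; simp [p, map_sub]
    _ ≤ limsup (p (u₀ - w)) l + limsup (-p u₀) l :=
      limsup_add_le (hb _).2 (hb _).1 hnegp₀.isBoundedUnder_ge.isCoboundedUnder_le
        hnegp₀.isBoundedUnder_le
    _ = limsup (p (u₀ - w)) l := by rw [hnegp₀.limsup_eq, add_zero]
    _ ≤ φ₀ w := (h (u₀ - w)).trans_eq (by rw [sub_sub_cancel])
  have hweak := tendsto_apply_of_forall_limsup_apply_le hφ hsup
  refine ⟨hweak, ?_⟩
  simpa [p, map_sub] using hp₀.add (hweak u₀)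

end Pairing

theorem brezis_iff_browder_pseudoMonotone_general
    (V : Type*) [NormedAddCommGroup V] [NormedSpace ℝ V]
    (A : V → (V →L[ℝ] ℝ))
    (hbdd : ∀ s : Set V, Bornology.IsBounded s → Bornology.IsBounded (A '' s)) :
    (∀ (u : ℕ → V) (u₀ : V),
      (∀ f : V →L[ℝ] ℝ, Tendsto (fun n => f (u n)) atTop (nhds (f u₀))) →
      0 ≤ liminf (fun n => A (u n) (u n - u₀)) atTop →
      ∀ v : V, limsup (fun n => A (u n) (u n - v)) atTop ≤ A u₀ (u₀ - v))
    ↔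
    (∀ (u : ℕ → V) (u₀ : V),
      (∀ f : V →L[ℝ] ℝ, Tendsto (fun n => f (u n)) atTop (nhds (f u₀))) →
      0 ≤ liminf (fun n => A (u n) (u n - u₀)) atTop →
      (∀ v : V, Tendsto (fun n => A (u n) v) atTop (nhds (A u₀ v))) ∧
        Tendsto (fun n => A (u n) (u n)) atTop (nhds (A u₀ u₀))) := by
  constructor
  · intro hBrezis u u₀ hweak hlim
    obtain ⟨C, hC⟩ := exists_norm_le_of_forall_bddAbove_norm_dual (𝕜 := ℝ) fun f =>
      (hweak f).norm.bddAbove_range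
    obtain ⟨M, hM⟩ := isBounded_iff_forall_norm_le.mp
      (hbdd _ (isBounded_iff_forall_norm_le.mpr ⟨C, Set.forall_mem_range.2 hC⟩))
    exact tendsto_apply_of_forall_limsup_apply_sub_le (fun n => hM _ ⟨u n, ⟨n, rfl⟩, rfl⟩) hC
      hlim (hBrezis u u₀ hweak hlim)
  · intro hBrowder u u₀ hweak hlim v
    obtain ⟨hAweak, hAself⟩ := hBrowder u u₀ hweak hlim
    simpa [map_sub] using (hAself.sub (hAweak v)).limsup_eq.le

/-- For a demicontinuous bounded operator `A : V → V*` on a reflexive Banach space,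
the Brézis definition of pseudo-monotonicity is equivalent to the Browder definition. -/
theorem brezis_iff_browder_pseudoMonotone
    (V : Type*) [NormedAddCommGroup V] [NormedSpace ℝ V] [CompleteSpace V]
    (hrefl : Function.Surjective (NormedSpace.inclusionInDoubleDual ℝ V))
    (A : V → (V →L[ℝ] ℝ))
    (hdemi : ∀ (u : ℕ → V) (u₀ : V), Tendsto u atTop (nhds u₀) →
      ∀ v : V, Tendsto (fun n => A (u n) v) atTop (nhds (A u₀ v)))
    (hbdd : ∀ s : Set V, Bornology.IsBounded s → Bornology.IsBounded (A '' s)) :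
    (∀ (u : ℕ → V) (u₀ : V),
      (∀ f : V →L[ℝ] ℝ, Tendsto (fun n => f (u n)) atTop (nhds (f u₀))) →
      0 ≤ liminf (fun n => A (u n) (u n - u₀)) atTop →
      ∀ v : V, limsup (fun n => A (u n) (u n - v)) atTop ≤ A u₀ (u₀ - v))
    ↔
    (∀ (u : ℕ → V) (u₀ : V),
      (∀ f : V →L[ℝ] ℝ, Tendsto (fun n => f (u n)) atTop (nhds (f u₀))) →
      0 ≤ liminf (fun n => A (u n) (u n - u₀)) atTop →
      (∀ v : V, Tendsto (fun n => A (u n) v) atTop (nhds (A u₀ v))) ∧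
        Tendsto (fun n => A (u n) (u n)) atTop (nhds (A u₀ u₀))) :=
  brezis_iff_browder_pseudoMonotone_general V A hbdd
end

section
/- Let E be a Polish space and {X^ε} a family of E-valued random variables satisfying the Laplace principle with good rate function I: for every bounded continuous h : E → ℝ, lim_{ε→0} ε log E[exp(−h(X^ε)/ε)] = −inf_{x∈E}{h(x) + I(x)}. Then for every open set G ⊆ E, lim inf_{ε→0} ε log P(X^ε ∈ G) ≥ −inf_{x∈G} I(x). -/
/-!
Fix `x ∈ G` and a level `β < -I x`. Complete regularity gives a continuous `h : E → [0, M]`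
with `h x = 0` and `h = M` off `G`, where `M > -β`. Then `inf (h + I) ≤ I x`, so the Laplace
principle makes `ε log ∫ exp (-h/ε) dμ_ε` eventually exceed some `γ ∈ (β, -I x)`, while
`∫ exp (-h/ε) dμ_ε ≤ μ_ε G + exp (-M/ε)`. Since `exp (-M/ε)` is exponentially smaller than
`exp (β/ε)`, the largest-term principle forces `ε log μ_ε G > β` for small `ε`.
-/

open MeasureTheory Filter Real Set Topology
open scoped ENNReal

lemma EReal.le_liminf_of_forall_coe_lt {α : Type*} {l : Filter α} {f : α → EReal} {a : EReal}
    (h : ∀ β : ℝ, (β : EReal) < a → ∀ᶠ x in l, (β : EReal) < f x) : a ≤ liminf f l := by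
  rw [le_liminf_iff]
  intro b hb
  obtain ⟨β, hbβ, hβa⟩ := EReal.exists_between_coe_real hb
  exact (h β hβa).mono fun _ hβ => hbβ.trans hβ

lemma exists_continuous_zero_const_of_isOpen {E : Type*} [TopologicalSpace E]
    [CompletelyRegularSpace E] {G : Set E} (hG : IsOpen G) {x : E} (hx : x ∈ G) {M : ℝ}
    (hM : 0 ≤ M) :
    ∃ h : E → ℝ, Continuous h ∧ h x = 0 ∧ (∀ y, h y ∈ Icc 0 M) ∧ EqOn h (fun _ => M) Gᶜ := by
  obtain ⟨f, hf, hfx, hfG⟩ := completelyRegularSpace_iff_isOpen.1 ‹_› x G hG hx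
  refine ⟨fun y => M * f y, continuous_const.mul (continuous_subtype_val.comp hf), by simp [hfx],
    fun y => ⟨mul_nonneg hM (f y).2.1, mul_le_of_le_one_right hM (f y).2.2⟩, fun y hy => ?_⟩
  simp [hfG hy]

lemma Real.log_add_le_log_two_add_log {a b : ℝ} (ha : 0 ≤ a) (hab : a ≤ b) (hb : 0 < b) :
    log (a + b) ≤ log 2 + log b := by
  rw [← log_mul two_ne_zero hb.ne']
  exact log_le_log (by positivity) (by linarith)

lemma lt_mul_log_of_lt_mul_log_add_exp {ε p M β : ℝ} (hε : 0 < ε) (hp : 0 ≤ p) (hMβ : -M < β)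
    (h : ε * log 2 + β < ε * log (p + exp (-M / ε))) : 0 < p ∧ β < ε * log p := by
  set q := exp (-M / ε)
  rcases le_or_gt p q with hpq | hqp
  · have : ε * log (p + q) ≤ ε * log 2 - M := by
      calc ε * log (p + q) ≤ ε * (log 2 + -M / ε) := by
            rw [← log_exp (-M / ε)]
            exact mul_le_mul_of_nonneg_left (log_add_le_log_two_add_log hp hpq (exp_pos _)) hε.le
        _ = ε * log 2 - M := by field_simp; ring
    linarith
  · have hp0 : 0 < p := (exp_pos _).trans hqp
    have : ε * log (p + q) ≤ ε * log 2 + ε * log p := by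
      rw [add_comm p, ← mul_add]
      exact mul_le_mul_of_nonneg_left
        (log_add_le_log_two_add_log (exp_pos _).le hqp.le hp0) hε.le
    exact ⟨hp0, by linarith⟩

lemma eventually_lt_mul_log_of_lt_mul_log_add_exp {p : ℝ → ℝ} (hp : ∀ ε, 0 ≤ p ε)
    {M β γ : ℝ} (hMβ : -M < β) (hβγ : β < γ)
    (h : ∀ᶠ ε in 𝓝[>] 0, γ < ε * log (p ε + exp (-M / ε))) :
    ∀ᶠ ε in 𝓝[>] 0, 0 < p ε ∧ β < ε * log (p ε) := by
  have hlog2 : Tendsto (fun ε : ℝ => ε * log 2) (𝓝[>] 0) (𝓝 0) := by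
    simpa using ((continuous_mul_const (log 2)).tendsto 0).mono_left nhdsWithin_le_nhds
  filter_upwards [h, self_mem_nhdsWithin, hlog2.eventually (eventually_lt_nhds (sub_pos.2 hβγ))]
    with ε hγ hε hε2
  exact lt_mul_log_of_lt_mul_log_add_exp hε (hp ε) hMβ (by linarith)

section Integral

variable {E : Type*} [MeasurableSpace E] {μ : Measure E} {G : Set E} {h : E → ℝ} {M ε : ℝ}

lemma integral_exp_neg_div_le [IsProbabilityMeasure μ] (hG : MeasurableSet G)
    (h0 : ∀ y, 0 ≤ h y) (hM : ∀ y ∉ G, M ≤ h y) (hε : 0 ≤ ε) :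
    ∫ y, exp (-h y / ε) ∂μ ≤ μ.real G + exp (-M / ε) := by
  have hpt : ∀ y, exp (-h y / ε) ≤ G.indicator 1 y + exp (-M / ε) := by
    intro y
    by_cases hy : y ∈ G
    · rw [indicator_of_mem hy, Pi.one_apply]
      have : exp (-h y / ε) ≤ 1 :=
        exp_le_one_iff.2 (div_nonpos_of_nonpos_of_nonneg (neg_nonpos.2 (h0 y)) hε)
      linarith [exp_pos (-M / ε)]
    · rw [indicator_of_notMem hy, zero_add]
      exact exp_le_exp.2 (div_le_div_of_nonneg_right (neg_le_neg (hM y hy)) hε)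
  have hint : Integrable (fun y => G.indicator 1 y + exp (-M / ε)) μ :=
    ((integrable_const 1).indicator hG).add (integrable_const _)
  calc ∫ y, exp (-h y / ε) ∂μ ≤ ∫ y, (G.indicator 1 y + exp (-M / ε)) ∂μ :=
        integral_mono_of_nonneg (.of_forall fun _ => (exp_pos _).le) hint (.of_forall hpt)
    _ = μ.real G + exp (-M / ε) := by
        rw [integral_add ((integrable_const 1).indicator hG) (integrable_const _),
          integral_indicator_one hG, integral_const, probReal_univ, one_smul]

lemma mul_log_integral_exp_neg_div_le [IsProbabilityMeasure μ] (hG : MeasurableSet G)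
    (hh : Measurable h) (h0 : ∀ y, 0 ≤ h y) (hM : ∀ y ∉ G, M ≤ h y) (hε : 0 < ε) :
    ε * log (∫ y, exp (-h y / ε) ∂μ) ≤ ε * log (μ.real G + exp (-M / ε)) := by
  have hint : Integrable (fun y => exp (-h y / ε)) μ := by
    refine .of_bound (by fun_prop) 1 (.of_forall fun y => ?_)
    rw [norm_of_nonneg (exp_pos _).le]
    exact exp_le_one_iff.2 (div_nonpos_of_nonpos_of_nonneg (neg_nonpos.2 (h0 y)) hε.le)
  exact mul_le_mul_of_nonneg_left (log_le_log (integral_exp_pos hint)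
    (integral_exp_neg_div_le hG h0 hM hε.le)) hε.le

end Integral

lemma eventually_lt_mul_log_measure {E : Type*} [MeasurableSpace E] {μ : ℝ → Measure E}
    (hprob : ∀ ε : ℝ, 0 < ε → IsProbabilityMeasure (μ ε)) {G : Set E} (hG : MeasurableSet G)
    {h : E → ℝ} (hh : Measurable h) (h0 : ∀ y, 0 ≤ h y) {M β γ : ℝ} (hM : ∀ y ∉ G, M ≤ h y)
    (hMβ : -M < β) (hβγ : β < γ)
    (hlaplace : ∀ᶠ ε in 𝓝[>] 0, γ < ε * log (∫ y, exp (-h y / ε) ∂(μ ε))) :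
    ∀ᶠ ε in 𝓝[>] 0, (β : EReal) < ε * ENNReal.log (μ ε G) := by
  have hsum : ∀ᶠ ε in 𝓝[>] 0, γ < ε * log ((μ ε).real G + exp (-M / ε)) := by
    filter_upwards [hlaplace, self_mem_nhdsWithin] with ε hγ hε
    have := hprob ε hε
    exact hγ.trans_le (mul_log_integral_exp_neg_div_le hG hh h0 hM hε)
  filter_upwards [eventually_lt_mul_log_of_lt_mul_log_add_exp (fun _ => measureReal_nonneg)
    hMβ hβγ hsum] with ε ⟨hpos, hβ⟩
  rwa [ENNReal.log_pos_real' hpos, ← EReal.coe_mul, EReal.coe_lt_coe_iff]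

theorem laplace_principle_implies_ldp_lower_bound_general
    (E : Type*) [MetricSpace E] [MeasurableSpace E] [BorelSpace E]
    (μ : ℝ → Measure E) (hprob : ∀ ε : ℝ, 0 < ε → IsProbabilityMeasure (μ ε))
    (I : E → ℝ≥0∞)
    (hlaplace : ∀ h : E → ℝ, Continuous h → (∃ B : ℝ, ∀ x, |h x| ≤ B) →
      Tendsto
        (fun ε : ℝ =>
          ((ε * Real.log (∫ x, Real.exp (-(h x) / ε) ∂(μ ε)) : ℝ) : EReal))
        (nhdsWithin 0 (Set.Ioi 0))
        (nhds (-(⨅ x : E, ((h x : EReal) + (I x : EReal)))))) :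
    ∀ G : Set E, IsOpen G →
      -(⨅ x ∈ G, (I x : EReal))
        ≤ liminf (fun ε : ℝ => (ε : EReal) * ENNReal.log (μ ε G))
            (nhdsWithin 0 (Set.Ioi 0)) := by
  intro G hG
  rw [EReal.neg_le]
  refine le_iInf₂ fun x hx => EReal.neg_le.1 (EReal.le_liminf_of_forall_coe_lt fun β hβ => ?_)
  obtain ⟨γ, hβγ, hγ⟩ := EReal.exists_between_coe_real hβ
  obtain ⟨h, hcont, hx0, hbound, hout⟩ :=
    exists_continuous_zero_const_of_isOpen hG hx (by positivity : 0 ≤ |β| + 1)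
  have hinf : -(I x : EReal) ≤ -⨅ y, ((h y : EReal) + (I y : EReal)) :=
    EReal.neg_le_neg_iff.2 (by simpa [hx0] using iInf_le (fun y => (h y : EReal) + I y) x)
  have hlim := hlaplace h hcont
    ⟨|β| + 1, fun y => (abs_of_nonneg (hbound y).1).trans_le (hbound y).2⟩
  refine eventually_lt_mul_log_measure hprob hG.measurableSet hcont.measurable
    (fun y => (hbound y).1) (fun y hy => (hout hy).ge) (by linarith [neg_abs_le β])
    (EReal.coe_lt_coe_iff.1 hβγ) ?_
  filter_upwards [hlim.eventually (eventually_gt_nhds (hγ.trans_le hinf))] with ε hε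
  exact_mod_cast hε

/-- The Laplace principle with a good rate function implies the large deviation
lower bound: for every open set `G`,
`lim inf ε log P(X^ε ∈ G) ≥ −inf_{x∈G} I(x)`. -/
theorem laplace_principle_implies_ldp_lower_bound
    (E : Type*) [MetricSpace E] [CompleteSpace E]
    [TopologicalSpace.SeparableSpace E] [MeasurableSpace E] [BorelSpace E]
    (μ : ℝ → Measure E) (hprob : ∀ ε : ℝ, 0 < ε → IsProbabilityMeasure (μ ε))
    (I : E → ℝ≥0∞)
    (hlsc : LowerSemicontinuous I)
    (hgood : ∀ K : ℝ≥0∞, 0 < K → K ≠ ⊤ → IsCompact {x : E | I x ≤ K})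
    (hlaplace : ∀ h : E → ℝ, Continuous h → (∃ B : ℝ, ∀ x, |h x| ≤ B) →
      Tendsto
        (fun ε : ℝ =>
          ((ε * Real.log (∫ x, Real.exp (-(h x) / ε) ∂(μ ε)) : ℝ) : EReal))
        (nhdsWithin 0 (Set.Ioi 0))
        (nhds (-(⨅ x : E, ((h x : EReal) + (I x : EReal)))))) :
    ∀ G : Set E, IsOpen G →
      -(⨅ x ∈ G, (I x : EReal))
        ≤ liminf (fun ε : ℝ => (ε : EReal) * ENNReal.log (μ ε G))
            (nhdsWithin 0 (Set.Ioi 0)) :=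
  laplace_principle_implies_ldp_lower_bound_general E μ hprob I hlaplace
end
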